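/- The polynomials Sₙ with S₀=1, S₁=x, Sₙ₊₁ = x·Sₙ − Sₙ₋₁ satisfy the identity Sₘ(x)·Sₙ(x) = Σ_{k=0}^{min(m,n)} S_{m+n−2k}(x) for all m, n ≥ 0. -/
import Mathlib


open Polynomial Finset

/-- Product formula for the Chebyshev-type polynomials:
`Sₘ·Sₙ = Σ_{k=0}^{min(m,n)} S_{m+n−2k}`. -/
theorem cheb_product (S : ℕ → Polynomial ℤ)
    (h0 : S 0 = 1) (h1 : S 1 = Polynomial.X)
    (hrec : ∀ n : ℕ, S (n + 2) = Polynomial.X * S (n + 1) - S n) :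
    ∀ m n : ℕ, S m * S n = ∑ k ∈ Finset.range (min m n + 1), S (m + n - 2 * k) := by
  have hX : ∀ m, Polynomial.X * S (m + 1) = S (m + 2) + S m := by
    intro m; rw [hrec m]; ring
  have key : ∀ n d : ℕ, S (n + d) * S n = ∑ j ∈ Finset.range (n + 1), S (d + 2 * j) := by
    intro n
    induction n using Nat.twoStepInduction with
    | zero => intro d; simp [h0]
    | one =>
      intro d
      rw [h1, show 1 + d = d + 1 from by omega, mul_comm, hX d,
        Finset.sum_range_succ, Finset.sum_range_one]
      norm_num
      ring
    | more n ih1 ih2 =>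
      intro d
      calc S (n + 2 + d) * S (n + 2)
          = Polynomial.X * (S (n + 1 + (d + 1)) * S (n + 1)) - S (n + (d + 2)) * S n := by
            rw [hrec n, show n + 1 + (d + 1) = n + 2 + d from by omega,
              show n + (d + 2) = n + 2 + d from by omega]; ring
        _ = Polynomial.X * ∑ j ∈ Finset.range (n + 2), S (d + 1 + 2 * j)
              - ∑ j ∈ Finset.range (n + 1), S (d + 2 + 2 * j) := by rw [ih2, ih1]
        _ = ∑ j ∈ Finset.range (n + 2), (S (d + 2 + 2 * j) + S (d + 2 * j))
              - ∑ j ∈ Finset.range (n + 1), S (d + 2 + 2 * j) := by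
            rw [Finset.mul_sum]; congr 1
            apply Finset.sum_congr rfl; intro j _
            rw [show d + 1 + 2 * j = d + 2 * j + 1 from by omega, hX (d + 2 * j),
              show d + 2 * j + 2 = d + 2 + 2 * j from by omega]
        _ = ∑ j ∈ Finset.range (n + 3), S (d + 2 * j) := by
            rw [Finset.sum_add_distrib,
              Finset.sum_range_succ (fun j => S (d + 2 + 2 * j)) (n + 1),
              Finset.sum_range_succ (fun j => S (d + 2 * j)) (n + 2)]
            rw [show d + 2 + 2 * (n + 1) = d + 2 * (n + 2) from by omega]
            ring
  have main : ∀ m n : ℕ, n ≤ m →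
      S m * S n = ∑ k ∈ Finset.range (n + 1), S (m + n - 2 * k) := by
    intro m n hnm
    have h := key n (m - n)
    rw [show n + (m - n) = m from by omega] at h
    rw [h, ← Finset.sum_range_reflect]
    apply Finset.sum_congr rfl
    intro j hj
    rw [Finset.mem_range] at hj
    congr 1
    omega
  intro m n
  rcases le_total n m with h | h
  · rw [min_eq_right h]; exact main m n h
  · rw [min_eq_left h, mul_comm]
    have := main n m h
    rw [this]
    apply Finset.sum_congr rfl
    intro k _
    congr 1
    omega
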